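/- Let K be a commutative ring with identity and let σ : ℕ → ℕ be a function such that σ(1) = 1, σ is nondecreasing, σ(m+n) ≤ σ(m) + σ(n) for all m, n ∈ ℕ, and lim_{n→∞} σ(n) = ∞. For n ∈ ℕ set G_n^σ := {(h,g) ∈ R(K) : h ∈ H^{σ(n)}(K), g ∈ N^n(K)}. Then each G_n^σ is a normal subgroup of R(K), the G_n^σ form a descending chain with trivial intersection (hence a filtration of R(K)), and [G_m^σ, G_n^σ] ⊆ G_{m+n}^σ for all m, n ∈ ℕ. -/

import Mathlib

open PowerSeries Finset

namespace RiordanPaper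

variable {K : Type*} [CommRing K]

noncomputable def comp (f g : PowerSeries K) : PowerSeries K :=
  PowerSeries.mk fun n => ∑ d ∈ Finset.range (n + 1), coeff d f * coeff n (g ^ d)

lemma coeff_comp (f g : PowerSeries K) (n : ℕ) :
    coeff n (comp f g) = ∑ d ∈ Finset.range (n + 1), coeff d f * coeff n (g ^ d) := by
  simp [comp]

lemma coeff_pow_eq_zero {g : PowerSeries K} (hg : constantCoeff g = 0) {n d : ℕ}
    (h : n < d) : coeff n (g ^ d) = 0 := by
  have hdvd : (X : PowerSeries K) ^ d ∣ g ^ d :=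
    pow_dvd_pow_of_dvd (PowerSeries.X_dvd_iff.2 hg) d
  exact (PowerSeries.X_pow_dvd_iff.1 hdvd) n h

lemma coeff_comp_of_lt {g : PowerSeries K} (hg : constantCoeff g = 0)
    (f : PowerSeries K) {n N : ℕ} (hn : n < N) :
    coeff n (comp f g) = ∑ d ∈ Finset.range N, coeff d f * coeff n (g ^ d) := by
  rw [coeff_comp]
  apply Finset.sum_subset
  · intro d hd
    simp only [Finset.mem_range] at hd ⊢
    omega
  · intro d _ hd'
    simp only [Finset.mem_range] at hd'
    rw [coeff_pow_eq_zero hg (by omega), mul_zero]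

lemma coeff_eval₂ {g : PowerSeries K} (hg : constantCoeff g = 0)
    (P : Polynomial K) (n : ℕ) :
    coeff n (Polynomial.eval₂ (C (R := K)) g P)
      = ∑ d ∈ Finset.range (n + 1), P.coeff d * coeff n (g ^ d) := by
  classical
  have h1 : P.natDegree < max (n + 1) (P.natDegree + 1) :=
    lt_of_lt_of_le (Nat.lt_succ_self _) (le_max_right _ _)
  rw [Polynomial.eval₂_eq_sum_range' (C (R := K)) h1 g, map_sum]
  have h2 : ∀ d ∈ Finset.range (max (n + 1) (P.natDegree + 1)),
      coeff n (C (P.coeff d) * g ^ d) = P.coeff d * coeff n (g ^ d) := fun d _ => by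
    rw [coeff_C_mul]
  rw [Finset.sum_congr rfl h2]
  symm
  apply Finset.sum_subset
  · intro d hd
    simp only [Finset.mem_range] at hd ⊢
    omega
  · intro d _ hd'
    simp only [Finset.mem_range] at hd'
    rw [coeff_pow_eq_zero hg (by omega), mul_zero]

lemma coeff_comp_eq_eval₂_trunc {g : PowerSeries K} (hg : constantCoeff g = 0)
    (f : PowerSeries K) {n N : ℕ} (hn : n < N) :
    coeff n (comp f g) = coeff n (Polynomial.eval₂ (C (R := K)) g (trunc N f)) := by
  rw [coeff_eval₂ hg, coeff_comp]
  apply Finset.sum_congr rfl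
  intro d hd
  simp only [Finset.mem_range] at hd
  rw [PowerSeries.coeff_trunc, if_pos (by omega)]

lemma mul_comp {g : PowerSeries K} (hg : constantCoeff g = 0) (f₁ f₂ : PowerSeries K) :
    comp (f₁ * f₂) g = comp f₁ g * comp f₂ g := by
  ext n
  have key : coeff n (comp (f₁ * f₂) g)
      = coeff n (Polynomial.eval₂ (C (R := K)) g (trunc (n + 1) f₁ * trunc (n + 1) f₂)) := by
    rw [coeff_eval₂ hg, coeff_comp]
    apply Finset.sum_congr rfl
    intro d hd
    simp only [Finset.mem_range] at hd
    congr 1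
    rw [Polynomial.coeff_mul, PowerSeries.coeff_mul]
    apply Finset.sum_congr rfl
    intro ab hab
    rw [Finset.HasAntidiagonal.mem_antidiagonal] at hab
    rw [PowerSeries.coeff_trunc, PowerSeries.coeff_trunc, if_pos (by omega), if_pos (by omega)]
  rw [key, Polynomial.eval₂_mul, PowerSeries.coeff_mul, PowerSeries.coeff_mul]
  apply Finset.sum_congr rfl
  intro ab hab
  rw [Finset.HasAntidiagonal.mem_antidiagonal] at hab
  rw [← coeff_comp_eq_eval₂_trunc hg f₁ (show ab.1 < n + 1 by omega),
    ← coeff_comp_eq_eval₂_trunc hg f₂ (show ab.2 < n + 1 by omega)]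

lemma one_comp (g : PowerSeries K) : comp (1 : PowerSeries K) g = 1 := by
  ext n
  rw [coeff_comp, Finset.sum_eq_single 0]
  · simp
  · intro d _ hd0
    simp [PowerSeries.coeff_one, hd0]
  · intro h
    simp at h

lemma comp_X (f : PowerSeries K) : comp f X = f := by
  ext n
  rw [coeff_comp, Finset.sum_eq_single n]
  · rw [coeff_X_pow, if_pos rfl, mul_one]
  · intro d _ hdn
    rw [coeff_X_pow, if_neg (fun h => hdn h.symm), mul_zero]
  · intro h
    simp at h

lemma X_comp {g : PowerSeries K} (hg : constantCoeff g = 0) : comp X g = g := by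
  ext n
  rcases Nat.eq_zero_or_pos n with hn | hn
  · subst hn
    rw [coeff_comp]
    simp [PowerSeries.coeff_X, coeff_zero_eq_constantCoeff_apply, hg]
  · rw [coeff_comp, Finset.sum_eq_single 1]
    · rw [coeff_one_X, pow_one, one_mul]
    · intro d _ hd1
      rw [PowerSeries.coeff_X, if_neg hd1, zero_mul]
    · intro h
      simp only [Finset.mem_range] at h
      omega

lemma constantCoeff_comp (f g : PowerSeries K) :
    constantCoeff (comp f g) = constantCoeff f := by
  rw [← coeff_zero_eq_constantCoeff_apply, coeff_comp]
  simp

lemma coeff_one_comp (f g : PowerSeries K) :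
    coeff 1 (comp f g) = coeff 1 f * coeff 1 g := by
  rw [coeff_comp]
  have : Finset.range 2 = {0, 1} := rfl
  rw [this, Finset.sum_insert (by simp), Finset.sum_singleton, pow_zero, pow_one]
  simp [PowerSeries.coeff_one]

lemma comp_assoc {g k : PowerSeries K} (hg : constantCoeff g = 0)
    (hk : constantCoeff k = 0) (f : PowerSeries K) :
    comp (comp f g) k = comp f (comp g k) := by
  have hpow : ∀ e : ℕ, (comp g k) ^ e = comp (g ^ e) k := by
    intro e
    induction e with
    | zero => simp [one_comp]
    | succ m ih => rw [pow_succ, pow_succ, ih, mul_comp hk]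
  ext n
  rw [coeff_comp, coeff_comp]
  have L1 : ∀ d ∈ Finset.range (n + 1), coeff d (comp f g) * coeff n (k ^ d)
      = ∑ e ∈ Finset.range (n + 1), coeff e f * coeff d (g ^ e) * coeff n (k ^ d) := by
    intro d hd
    simp only [Finset.mem_range] at hd
    rw [coeff_comp_of_lt hg f hd, Finset.sum_mul]
  rw [Finset.sum_congr rfl L1, Finset.sum_comm]
  apply Finset.sum_congr rfl
  intro e _
  rw [hpow e, coeff_comp, Finset.mul_sum]
  apply Finset.sum_congr rfl
  intro d _
  ring

/-- An element of the Riordan group: a pair `(h, g)` with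
`h = 1 + a₁x + ⋯` and `g = x + b₂x² + ⋯`. -/
@[ext]
structure RiordanElem (K : Type*) [CommRing K] where
  h : PowerSeries K
  g : PowerSeries K
  h_zero : constantCoeff h = 1
  g_zero : constantCoeff g = 0
  g_one : coeff 1 g = 1

namespace RiordanElem

noncomputable instance : Mul (RiordanElem K) :=
  ⟨fun a b => ⟨a.h * comp b.h a.g, comp b.g a.g,
    by rw [map_mul, a.h_zero, one_mul, constantCoeff_comp, b.h_zero],
    by rw [constantCoeff_comp, b.g_zero],
    by rw [coeff_one_comp, b.g_one, a.g_one, one_mul]⟩⟩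

noncomputable instance : One (RiordanElem K) :=
  ⟨⟨1, X, map_one _, constantCoeff_X, coeff_one_X⟩⟩

@[simp] lemma mul_h (a b : RiordanElem K) : (a * b).h = a.h * comp b.h a.g := rfl
@[simp] lemma mul_g (a b : RiordanElem K) : (a * b).g = comp b.g a.g := rfl
@[simp] lemma one_h : (1 : RiordanElem K).h = 1 := rfl
@[simp] lemma one_g : (1 : RiordanElem K).g = X := rfl

noncomputable instance instMonoid : Monoid (RiordanElem K) where
  mul_assoc a b c := by
    ext1
    · show (a.h * comp b.h a.g) * comp c.h (comp b.g a.g)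
        = a.h * comp (b.h * comp c.h b.g) a.g
      rw [mul_comp a.g_zero, ← comp_assoc b.g_zero a.g_zero, mul_assoc]
    · show comp c.g (comp b.g a.g) = comp (comp c.g b.g) a.g
      rw [comp_assoc b.g_zero a.g_zero]
  one_mul a := by
    ext1
    · show (1 : PowerSeries K) * comp a.h X = a.h
      rw [comp_X, one_mul]
    · show comp a.g X = a.g
      exact comp_X a.g
  mul_one a := by
    ext1
    · show a.h * comp 1 a.g = a.h
      rw [one_comp, mul_one]
    · show comp X a.g = a.g
      exact X_comp a.g_zero

end RiordanElem

/-- The Riordan group over `K`, realized as the units of the Riordan monoid. -/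
noncomputable abbrev RiordanGroup (K : Type*) [CommRing K] := (RiordanElem K)ˣ

/-- An element of the Nottingham group: `g = x + b₂x² + ⋯`. -/
@[ext]
structure NottinghamElem (K : Type*) [CommRing K] where
  g : PowerSeries K
  g_zero : constantCoeff g = 0
  g_one : coeff 1 g = 1

namespace NottinghamElem

noncomputable instance : Mul (NottinghamElem K) :=
  ⟨fun a b => ⟨comp b.g a.g,
    by rw [constantCoeff_comp, b.g_zero],
    by rw [coeff_one_comp, b.g_one, a.g_one, one_mul]⟩⟩

noncomputable instance : One (NottinghamElem K) :=
  ⟨⟨X, constantCoeff_X, coeff_one_X⟩⟩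

@[simp] lemma mul_g (a b : NottinghamElem K) : (a * b).g = comp b.g a.g := rfl
@[simp] lemma one_g : (1 : NottinghamElem K).g = X := rfl

noncomputable instance instMonoid : Monoid (NottinghamElem K) where
  mul_assoc a b c := by
    ext1
    show comp c.g (comp b.g a.g) = comp (comp c.g b.g) a.g
    rw [comp_assoc b.g_zero a.g_zero]
  one_mul a := by
    ext1
    show comp a.g X = a.g
    exact comp_X a.g
  mul_one a := by
    ext1
    show comp X a.g = a.g
    exact X_comp a.g_zero

end NottinghamElem

/-- The Nottingham group over `K`, realized as the units of the Nottingham monoid. -/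
noncomputable abbrev NottinghamGroup (K : Type*) [CommRing K] := (NottinghamElem K)ˣ

/-- `h` belongs to `H^n(K)`: the coefficients in degrees `1,…,n-1` vanish
(the constant-coefficient-one condition being imposed separately). -/
def IsHn (n : ℕ) (f : PowerSeries K) : Prop := ∀ i, 0 < i → i < n → coeff i f = 0

/-- `g` belongs to `N^n(K)`: the coefficients in degrees `2,…,n` vanish
(the conditions at degree `0`, `1` being imposed separately). -/
def IsNn (n : ℕ) (g : PowerSeries K) : Prop := ∀ j, 1 < j → j ≤ n → coeff j g = 0

/-- The subset `R^{m,n}(K) = H^m(K) ⋊ N^n(K)` of the Riordan group. -/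
def Rmn (K : Type*) [CommRing K] (m n : ℕ) : Set (RiordanGroup K) :=
  {u | IsHn m ((u : RiordanElem K).h) ∧ IsNn n ((u : RiordanElem K).g)}

/-- The subset `R^n(K) = H^n(K) ⋊ N^n(K)` of the Riordan group. -/
def Rn (K : Type*) [CommRing K] (n : ℕ) : Set (RiordanGroup K) := Rmn K n n

/-! Membership in `Rmn K M n` says that `h ≡ 1` below degree `M` and `g ≡ x` up to degree `n`,
so all closure properties reduce to congruences of power series. Substituting
`g = x + O(x^{m+1})` moves `f ∈ H^M` only from degree `M + m` on, and two substitutions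
`x + O(x^{m+1})`, `x + O(x^{n+1})` commute up to degree `m + n`. Hence `ab ≡ ba` modulo
`G_{m+n}^σ`, because `σ(m + n) ≤ σ(m) + n, m + σ(n)` by subadditivity and `σ(k) ≤ k`; the
latter also gives normality (conjugation needs `σ(n) ≤ n + 1`), and `σ(n) → ∞` gives the
trivial intersection. -/

def EqUpTo (N : ℕ) (f f' : PowerSeries K) : Prop :=
  ∀ j, j ≤ N → coeff j f = coeff j f'

namespace EqUpTo

variable {N : ℕ} {f f' f'' g g' : PowerSeries K}

lemma refl (f : PowerSeries K) : EqUpTo N f f := fun _ _ => rfl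

lemma symm (h : EqUpTo N f f') : EqUpTo N f' f := fun j hj => (h j hj).symm

lemma trans (h : EqUpTo N f f') (h' : EqUpTo N f' f'') : EqUpTo N f f'' :=
  fun j hj => (h j hj).trans (h' j hj)

lemma mono {N' : ℕ} (h : EqUpTo N f f') (hN : N' ≤ N) : EqUpTo N' f f' :=
  fun j hj => h j (hj.trans hN)

lemma add (hf : EqUpTo N f f') (hg : EqUpTo N g g') : EqUpTo N (f + g) (f' + g') :=
  fun j hj => by rw [map_add, map_add, hf j hj, hg j hj]

lemma mul (hf : EqUpTo N f f') (hg : EqUpTo N g g') : EqUpTo N (f * g) (f' * g') := by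
  intro j hj
  rw [coeff_mul, coeff_mul]
  refine Finset.sum_congr rfl fun ab hab => ?_
  rw [HasAntidiagonal.mem_antidiagonal] at hab
  rw [hf ab.1 (by omega), hg ab.2 (by omega)]

lemma pow (hg : EqUpTo N g g') (d : ℕ) : EqUpTo N (g ^ d) (g' ^ d) := by
  induction d with
  | zero => exact refl _
  | succ d ih => simpa only [pow_succ] using ih.mul hg

lemma comp_left (hf : EqUpTo N f f') (g : PowerSeries K) : EqUpTo N (comp f g) (comp f' g) := by
  intro j hj
  simp only [coeff_comp]
  refine Finset.sum_congr rfl fun d hd => ?_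
  rw [hf d (by rw [Finset.mem_range] at hd; omega)]

lemma comp_right (hg : EqUpTo N g g') (f : PowerSeries K) : EqUpTo N (comp f g) (comp f g') := by
  intro j hj
  simp only [coeff_comp]
  exact Finset.sum_congr rfl fun d _ => by rw [hg.pow d j hj]

end EqUpTo

lemma add_comp (f₁ f₂ g : PowerSeries K) : comp (f₁ + f₂) g = comp f₁ g + comp f₂ g := by
  ext n
  simp only [coeff_comp, map_add, add_mul, Finset.sum_add_distrib]

lemma constantCoeff_eq_zero_of_eqUpTo_X {n : ℕ} {g : PowerSeries K} (hg : EqUpTo n g X) :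
    constantCoeff g = 0 := by
  simpa using hg 0 n.zero_le

lemma isHn_iff_eqUpTo_one {M : ℕ} {f : PowerSeries K} (hf : constantCoeff f = 1) :
    IsHn M f ↔ EqUpTo (M - 1) f 1 := by
  refine ⟨fun h j hj => ?_, fun h i hi hiM => ?_⟩
  · rcases Nat.eq_zero_or_pos j with rfl | hj0
    · simpa using hf
    · rw [h j hj0 (by omega), coeff_one, if_neg (by omega)]
  · rw [h i (by omega), coeff_one, if_neg (by omega)]

lemma isNn_iff_eqUpTo_X {n : ℕ} {g : PowerSeries K} (h0 : constantCoeff g = 0)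
    (h1 : coeff 1 g = 1) : IsNn n g ↔ EqUpTo n g X := by
  refine ⟨fun h j hj => ?_, fun h j hj hjn => ?_⟩
  · rcases lt_or_ge j 2 with hj2 | hj2
    · interval_cases j <;> simp [h0, h1]
    · rw [h j hj2 hj, coeff_X, if_neg (by omega)]
  · rw [h j hjn, coeff_X, if_neg (by omega)]

lemma pow_eqUpTo_X_pow {m : ℕ} {g : PowerSeries K} (hg : EqUpTo m g X) (d : ℕ) :
    EqUpTo (m + d - 1) (g ^ d) (X ^ d) := by
  have h0 := constantCoeff_eq_zero_of_eqUpTo_X hg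
  induction d with
  | zero => exact EqUpTo.refl _
  | succ d ih =>
    intro j hj
    rw [pow_succ, pow_succ, coeff_mul, coeff_mul]
    refine Finset.sum_congr rfl fun ab hab => ?_
    rw [HasAntidiagonal.mem_antidiagonal] at hab
    rcases le_or_gt ab.2 m with hbm | hbm
    · rcases Nat.eq_zero_or_pos ab.2 with hb0 | hb0
      · rw [hb0, hg 0 (Nat.zero_le m), coeff_zero_X, mul_zero, mul_zero]
      · rw [hg ab.2 hbm, ih ab.1 (by omega)]
    · rw [coeff_pow_eq_zero h0 (by omega), coeff_X_pow, if_neg (by omega), zero_mul, zero_mul]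

lemma comp_eqUpTo_self {M m : ℕ} (hm : 1 ≤ m) {f g : PowerSeries K} (hf : IsHn M f)
    (hg : EqUpTo m g X) : EqUpTo (m + M - 1) (comp f g) f := by
  intro j hj
  rw [coeff_comp, Finset.sum_eq_single j]
  · rw [pow_eqUpTo_X_pow hg j j (by omega), coeff_X_pow_self, mul_one]
  · intro d hd hdj
    rcases Nat.eq_zero_or_pos d with rfl | hd0
    · rw [pow_zero, coeff_one, if_neg (by omega), mul_zero]
    · rcases lt_or_ge d M with hdM | hdM
      · rw [hf d hd0 hdM, zero_mul]
      · rw [pow_eqUpTo_X_pow hg d j (by omega), coeff_X_pow, if_neg (by omega), mul_zero]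
  · exact fun hj' => absurd (Finset.self_mem_range_succ j) hj'

lemma comp_eqUpTo_add_sub_X {m n : ℕ} (hm : 1 ≤ m) {g₁ g₂ : PowerSeries K}
    (h₁ : EqUpTo m g₁ X) (h₂ : EqUpTo n g₂ X) :
    EqUpTo (m + n) (comp g₂ g₁) (g₁ + g₂ - X) := by
  have hr : IsHn (n + 1) (g₂ - X) := fun i _ hi => by rw [map_sub, h₂ i (by omega), sub_self]
  have hsplit : comp g₂ g₁ = g₁ + comp (g₂ - X) g₁ := by
    conv_lhs => rw [← add_sub_cancel X g₂]
    rw [add_comp, X_comp (constantCoeff_eq_zero_of_eqUpTo_X h₁)]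
  rw [hsplit, add_sub_assoc]
  exact (EqUpTo.refl g₁).add (comp_eqUpTo_self hm hr h₁)

lemma comp_comm_eqUpTo {m n : ℕ} (hm : 1 ≤ m) (hn : 1 ≤ n) {g₁ g₂ : PowerSeries K}
    (h₁ : EqUpTo m g₁ X) (h₂ : EqUpTo n g₂ X) :
    EqUpTo (m + n) (comp g₂ g₁) (comp g₁ g₂) := by
  have h₂₁ := comp_eqUpTo_add_sub_X hn h₂ h₁
  rw [add_comm n, add_comm g₂] at h₂₁
  exact (comp_eqUpTo_add_sub_X hm h₁ h₂).trans h₂₁.symm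

namespace RiordanElem

/-- Congruence modulo `Rmn K M n`: for units, `u⁻¹ w ∈ Rmn K M n` iff `Congr M n u w`. -/
def Congr (M n : ℕ) (u w : RiordanElem K) : Prop :=
  EqUpTo (M - 1) u.h w.h ∧ EqUpTo n u.g w.g

namespace Congr

variable {M n : ℕ} {u w w' : RiordanElem K}

lemma refl (u : RiordanElem K) : Congr M n u u := ⟨EqUpTo.refl _, EqUpTo.refl _⟩

lemma symm (h : Congr M n u w) : Congr M n w u := ⟨h.1.symm, h.2.symm⟩

lemma trans (h : Congr M n u w) (h' : Congr M n w w') : Congr M n u w' :=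
  ⟨h.1.trans h'.1, h.2.trans h'.2⟩

lemma mul_left (h : Congr M n u w) (v : RiordanElem K) : Congr M n (v * u) (v * w) :=
  ⟨(EqUpTo.refl v.h).mul (h.1.comp_left v.g), h.2.comp_left v.g⟩

lemma mul_right (hMn : M - 1 ≤ n) (h : Congr M n u w) (v : RiordanElem K) :
    Congr M n (u * v) (w * v) :=
  ⟨h.1.mul ((h.2.comp_right v.h).mono hMn), h.2.comp_right v.g⟩

end Congr

end RiordanElem

open RiordanElem

lemma mem_Rmn_iff {M n : ℕ} {u : RiordanGroup K} :
    u ∈ Rmn K M n ↔ (u : RiordanElem K).Congr M n 1 :=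
  (isHn_iff_eqUpTo_one u.val.h_zero).and (isNn_iff_eqUpTo_X u.val.g_zero u.val.g_one)

lemma inv_mul_mem_Rmn {M n : ℕ} {u w : RiordanGroup K}
    (h : (u : RiordanElem K).Congr M n w) : u⁻¹ * w ∈ Rmn K M n := by
  rw [mem_Rmn_iff, Units.val_mul, ← u.inv_mul]
  exact (h.mul_left _).symm

lemma mul_mem_Rmn {M n : ℕ} {u v : RiordanGroup K} (hu : u ∈ Rmn K M n) (hv : v ∈ Rmn K M n) :
    u * v ∈ Rmn K M n := by
  rw [mem_Rmn_iff] at hu hv ⊢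
  rw [Units.val_mul]
  exact (hv.mul_left _).trans (by rwa [mul_one])

def RmnSubgroup (K : Type*) [CommRing K] (M n : ℕ) : Subgroup (RiordanGroup K) where
  carrier := Rmn K M n
  one_mem' := mem_Rmn_iff.2 (Congr.refl 1)
  mul_mem' := mul_mem_Rmn
  inv_mem' hu := by simpa using inv_mul_mem_Rmn (w := 1) (mem_Rmn_iff.1 hu)

lemma normal_RmnSubgroup {M n : ℕ} (hMn : M - 1 ≤ n) : (RmnSubgroup K M n).Normal where
  conj_mem u hu v := by
    have h := ((mem_Rmn_iff.1 hu).mul_right hMn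
      ((v⁻¹ : RiordanGroup K) : RiordanElem K)).mul_left (v : RiordanElem K)
    simpa [RmnSubgroup, mem_Rmn_iff, mul_assoc] using h

lemma Rmn_subset_Rmn {M M' n n' : ℕ} (hM : M' ≤ M) (hn : n' ≤ n) : Rmn K M n ⊆ Rmn K M' n' :=
  fun _ hu =>
    ⟨fun i hi hiM => hu.1 i hi (hiM.trans_le hM), fun j hj hjn => hu.2 j hj (hjn.trans hn)⟩

lemma eq_one_of_forall_exists_mem_Rmn {u : RiordanGroup K}
    (hu : ∀ N, ∃ M n, N < M ∧ N ≤ n ∧ u ∈ Rmn K M n) : u = 1 := by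
  have hcoeff : ∀ N, coeff N (u : RiordanElem K).h = coeff N 1 ∧
      coeff N (u : RiordanElem K).g = coeff N X := fun N => by
    obtain ⟨M, n, hNM, hNn, hmem⟩ := hu N
    exact ⟨(mem_Rmn_iff.1 hmem).1 N (by omega), (mem_Rmn_iff.1 hmem).2 N hNn⟩
  exact Units.ext (RiordanElem.ext (PowerSeries.ext fun N => (hcoeff N).1)
    (PowerSeries.ext fun N => (hcoeff N).2))

lemma commutator_mem_Rmn {M M' L m n : ℕ} (hm : 1 ≤ m) (hn : 1 ≤ n) (hL : L ≤ M + n)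
    (hL' : L ≤ M' + m) {a b : RiordanGroup K} (ha : a ∈ Rmn K M m) (hb : b ∈ Rmn K M' n) :
    a⁻¹ * b⁻¹ * a * b ∈ Rmn K L (m + n) := by
  have hag := (mem_Rmn_iff.1 ha).2
  have hbg := (mem_Rmn_iff.1 hb).2
  have hba : EqUpTo (L - 1) (b.val.h * comp a.val.h b.val.g) (b.val.h * a.val.h) :=
    (EqUpTo.refl _).mul ((comp_eqUpTo_self hn ha.1 hbg).mono (by omega))
  have hab : EqUpTo (L - 1) (a.val.h * comp b.val.h a.val.g) (b.val.h * a.val.h) := by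
    rw [mul_comm b.val.h]
    exact (EqUpTo.refl _).mul ((comp_eqUpTo_self hm hb.1 hag).mono (by omega))
  have hcongr : (↑(b * a) : RiordanElem K).Congr L (m + n) ↑(a * b) :=
    ⟨hba.trans hab.symm, (comp_comm_eqUpTo hm hn hag hbg).symm⟩
  simpa [mul_assoc] using inv_mul_mem_Rmn hcongr

lemma le_self_of_subadditive {σ : ℕ → ℕ} (hσ1 : σ 1 = 1)
    (hsub : ∀ m n : ℕ, 1 ≤ m → 1 ≤ n → σ (m + n) ≤ σ m + σ n) {n : ℕ} (hn : 1 ≤ n) : σ n ≤ n := by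
  induction n, hn using Nat.le_induction with
  | base => exact hσ1.le
  | succ k hk ih => linarith [hsub k 1 hk le_rfl]

/-- for subadditive nondecreasing `σ` with `σ(1) = 1` and `σ(n) → ∞`, the
sets `G_n^σ = H^{σ(n)}(K) ⋊ N^n(K)` are normal subgroups of `R(K)` forming a descending
chain with trivial intersection (a filtration), and `[G_m^σ, G_n^σ] ⊆ G_{m+n}^σ`. -/
theorem sigma_filtration (K : Type*) [CommRing K] (σ : ℕ → ℕ) (hσ1 : σ 1 = 1)
    (hmono : ∀ m n : ℕ, m ≤ n → σ m ≤ σ n)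
    (hsub : ∀ m n : ℕ, 1 ≤ m → 1 ≤ n → σ (m + n) ≤ σ m + σ n)
    (hlim : Filter.Tendsto σ Filter.atTop Filter.atTop) :
    (∀ n : ℕ, 1 ≤ n → ∃ H : Subgroup (RiordanGroup K),
      (H : Set (RiordanGroup K)) = Rmn K (σ n) n ∧ H.Normal) ∧
    (∀ n : ℕ, 1 ≤ n → Rmn K (σ (n + 1)) (n + 1) ⊆ Rmn K (σ n) n) ∧
    (⋂ n ∈ {n : ℕ | 1 ≤ n}, Rmn K (σ n) n) = {1} ∧
    (∀ m n : ℕ, 1 ≤ m → 1 ≤ n → ∀ a ∈ Rmn K (σ m) m, ∀ b ∈ Rmn K (σ n) n,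
      a⁻¹ * b⁻¹ * a * b ∈ Rmn K (σ (m + n)) (m + n)) := by
  have hle : ∀ n, 1 ≤ n → σ n ≤ n := fun n hn => le_self_of_subadditive hσ1 hsub hn
  refine ⟨fun n hn =>
      ⟨RmnSubgroup K (σ n) n, rfl, normal_RmnSubgroup (by have := hle n hn; omega)⟩,
    fun n _ => Rmn_subset_Rmn (hmono n (n + 1) n.le_succ) n.le_succ, ?_,
    fun m n hm hn a ha b hb => commutator_mem_Rmn hm hn ?_ ?_ ha hb⟩
  · refine Set.Subset.antisymm (fun u hu => ?_) ?_
    · simp only [Set.mem_iInter] at hu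
      refine eq_one_of_forall_exists_mem_Rmn fun N => ?_
      obtain ⟨n, hσn, hn⟩ :=
        ((hlim.eventually_gt_atTop N).and (Filter.eventually_gt_atTop N)).exists
      exact ⟨σ n, n, hσn, hn.le, hu n (show 1 ≤ n by omega)⟩
    · exact Set.subset_iInter₂ fun n _ =>
        Set.singleton_subset_iff.2 (one_mem (RmnSubgroup K (σ n) n))
  · linarith [hsub m n hm hn, hle n hn]
  · linarith [hsub m n hm hn, hle m hm]

end RiordanPaper
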